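/- arXiv:2407.07095 — 4 statements merged into one kernel-verified Lean document; each statement's English description precedes it below -/
import Mathlib

section
/- For any natural numbers N ≥ 1 and d ≥ 1 with (d+1)(d+2)/2 > N, and any points (x_1,y_1),…,(x_N,y_N) ∈ ℝ², there exists a nonzero real polynomial f in two variables of total degree at most d such that f(x_i, y_i) = 0 for every i = 1,…,N. -/
open MvPolynomial Finset

lemma aeval_eq_eval_real {n : ℕ} (v : Fin n → ℝ) (p : MvPolynomial (Fin n) ℝ) :
    MvPolynomial.aeval v p = MvPolynomial.eval v p := by
  rw [MvPolynomial.aeval_def, MvPolynomial.eval, Algebra.algebraMap_self]; rfl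

/-- For any natural numbers `N ≥ 1` and `d ≥ 1` with
`(d+1)(d+2)/2 > N`, and any `N` points in `ℝ²`, there exists a nonzero real
polynomial `f` in two variables of total degree at most `d` vanishing at all
the points. -/
theorem exists_nonzero_poly_of_degree_le_vanishing
    (N d : ℕ) (hN : 1 ≤ N) (hd : 1 ≤ d) (h : (d + 1) * (d + 2) / 2 > N)
    (P : Fin N → ℝ × ℝ) :
    ∃ f : MvPolynomial (Fin 2) ℝ, f ≠ 0 ∧ f.totalDegree ≤ d ∧
      ∀ i : Fin N, MvPolynomial.eval ![(P i).1, (P i).2] f = 0 := by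
  classical
  set D : Finset (ℕ × ℕ) :=
    ((range (d+1)) ×ˢ (range (d+1))).filter (fun p => p.1 + p.2 ≤ d) with hDdef
  have hDeq : D = (range (d+1)).biUnion (fun k => Finset.HasAntidiagonal.antidiagonal k) := by
    ext ⟨a, b⟩
    simp only [hDdef, mem_filter, mem_product, mem_range, mem_biUnion,
      Finset.HasAntidiagonal.mem_antidiagonal]
    constructor
    · rintro ⟨⟨-, -⟩, hab⟩; exact ⟨a + b, by omega, rfl⟩
    · rintro ⟨k, hk, rfl⟩; omega
  have hcard2 : D.card * 2 = (d+1) * (d+2) := by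
    rw [hDeq, Finset.card_biUnion]
    · have h1 : ∑ k ∈ range (d+1), (Finset.HasAntidiagonal.antidiagonal k).card
          = (∑ k ∈ range (d+1), k) + (d+1) := by
        simp [Finset.Nat.card_antidiagonal, Finset.sum_add_distrib]
      have h2 : (∑ k ∈ range (d+1), k) * 2 = (d+1)*d := by
        simpa using Finset.sum_range_id_mul_two (d+1)
      have h3 : (d+1)*(d+2) = (d+1)*d + 2*(d+1) := by ring
      omega
    · intro x hx y hy hxy
      simp only [Finset.disjoint_left, Finset.HasAntidiagonal.mem_antidiagonal]
      rintro ⟨a,b⟩ h1 h2; exact hxy (h1 ▸ h2 ▸ rfl)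
  have hDcard : N < D.card := by omega
  set σ : ℕ × ℕ → (Fin 2 →₀ ℕ) :=
    fun p => Finsupp.single 0 p.1 + Finsupp.single 1 p.2 with hσdef
  have hσinj : Function.Injective σ := by
    intro p q hpq
    have h0 := DFunLike.congr_fun hpq (0 : Fin 2)
    have h1 := DFunLike.congr_fun hpq (1 : Fin 2)
    simp [hσdef, Finsupp.single_apply] at h0 h1
    exact Prod.ext h0 h1
  set v : Fin N → (Fin 2 → ℝ) := fun i => ![(P i).1, (P i).2] with hvdef
  set F : (D → ℝ) →ₗ[ℝ] MvPolynomial (Fin 2) ℝ :=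
    Fintype.linearCombination ℝ (fun s : D => monomial (σ s.1) (1:ℝ)) with hFdef
  set φ : (D → ℝ) →ₗ[ℝ] (Fin N → ℝ) :=
    LinearMap.pi (fun i => (aeval (v i)).toLinearMap ∘ₗ F) with hφdef
  have hφni : ¬ Function.Injective φ := by
    intro hinj
    have := LinearMap.finrank_le_finrank_of_injective hinj
    rw [Module.finrank_fintype_fun_eq_card, Module.finrank_fintype_fun_eq_card] at this
    simp [Fintype.card_coe] at this
    omega
  rw [← LinearMap.ker_eq_bot] at hφni
  obtain ⟨c, hcmem, hcne⟩ := Submodule.ne_bot_iff _ |>.mp hφni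
  have hφc : ∀ i, φ c i = 0 := fun i => by
    have := (LinearMap.mem_ker).mp hcmem; rw [this]; rfl
  have hcoeff : ∀ s : D, coeff (σ s.1) (F c) = c s := by
    intro s
    rw [hFdef]
    simp only [Fintype.linearCombination_apply]
    rw [coeff_sum]
    rw [Finset.sum_eq_single s]
    · simp [coeff_smul, coeff_monomial]
    · intro b _ hb
      have : σ b.1 ≠ σ s.1 := fun hbs => hb (Subtype.ext (hσinj hbs))
      simp [coeff_smul, coeff_monomial, this]
    · simp
  refine ⟨F c, ?_, ?_, ?_⟩
  · intro hFc0
    obtain ⟨s, hs⟩ : ∃ s : D, c s ≠ 0 := by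
      by_contra hall
      push_neg at hall
      exact hcne (funext fun s => hall s)
    apply hs
    have := hcoeff s
    rw [hFc0] at this
    simpa using this.symm
  · rw [hFdef]
    simp only [Fintype.linearCombination_apply]
    refine le_trans (totalDegree_finset_sum _ _) ?_
    apply Finset.sup_le
    intro s _
    refine le_trans (totalDegree_smul_le _ _) ?_
    rw [totalDegree_monomial _ one_ne_zero]
    have hsD : s.1 ∈ D := s.2
    simp only [hDdef, mem_filter] at hsD
    have : (σ s.1).sum (fun _ e => e) = s.1.1 + s.1.2 := by
      rw [hσdef]
      rw [Finsupp.sum_add_index (by simp) (by simp)]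
      simp
    omega
  · intro i
    have := hφc i
    rw [hφdef] at this
    simp only [LinearMap.pi_apply, LinearMap.comp_apply, AlgHom.toLinearMap_apply] at this
    rw [← aeval_eq_eval_real]
    exact this
end

section
/- Let B_i = (a_i, A_i) × (b_i, B_i) ⊂ ℝ², i = 1,…,N, be N open rectangles, let d ≥ 1, and let D_d : ℝ^{2N} → ℝ be defined by D_d(x_1,y_1,…,x_N,y_N) = det(A^[d](x_1,y_1,…,x_N,y_N)). If D_d(x_1,y_1,…,x_N,y_N) > 0 for every choice of points (x_i,y_i) ∈ B_i (i = 1,…,N), then every nonzero real bivariate polynomial f whose zero set Zero(f) = {(x,y) ∈ ℝ² : f(x,y) = 0} intersects every rectangle B_i has total degree at least d+1. -/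
open Matrix

/-- The index set of monomials `x^a y^b` with `a + b ≤ d`; it has
`(d+1)(d+2)/2` elements. -/
abbrev MonIdx (d : ℕ) := {ab : Fin (d + 1) × Fin (d + 1) // (ab.1 : ℕ) + (ab.2 : ℕ) ≤ d}

/-- The vector `v_d(x,y) ∈ ℝ^p` of all monomials `x^a y^b` with `a + b ≤ d`,
evaluated at the point `(x, y)`. -/
noncomputable def monVec (d : ℕ) (P : ℝ × ℝ) : MonIdx d → ℝ :=
  fun m => P.1 ^ (m.1.1 : ℕ) * P.2 ^ (m.1.2 : ℕ)

/-- The `p × p` symmetric matrix `A^[d] = ∑ i, v_d(x_i,y_i) ⬝ v_d(x_i,y_i)ᵀ`. -/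
noncomputable def interpMat (d N : ℕ) (P : Fin N → ℝ × ℝ) :
    Matrix (MonIdx d) (MonIdx d) ℝ :=
  ∑ i : Fin N, Matrix.vecMulVec (monVec d (P i)) (monVec d (P i))

/-- Let `B_i = (lo₁ i, hi₁ i) × (lo₂ i, hi₂ i)` be `N` open
rectangles. If `D_d = det ∘ A^[d]` is strictly positive for every choice of
points `(x_i, y_i) ∈ B_i`, then every nonzero real bivariate polynomial whose
zero set meets every rectangle has total degree at least `d + 1`. -/
theorem totalDegree_ge_of_det_pos_on_boxes
    (N d : ℕ) (hd : 1 ≤ d)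
    (lo₁ hi₁ lo₂ hi₂ : Fin N → ℝ)
    (hfunction : ∀ P : Fin N → ℝ × ℝ,
      (∀ i : Fin N, (P i).1 ∈ Set.Ioo (lo₁ i) (hi₁ i) ∧
        (P i).2 ∈ Set.Ioo (lo₂ i) (hi₂ i)) →
      0 < (interpMat d N P).det)
    (f : MvPolynomial (Fin 2) ℝ) (hf : f ≠ 0)
    (hzero : ∀ i : Fin N, ∃ P : ℝ × ℝ,
      P.1 ∈ Set.Ioo (lo₁ i) (hi₁ i) ∧ P.2 ∈ Set.Ioo (lo₂ i) (hi₂ i) ∧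
      MvPolynomial.eval ![P.1, P.2] f = 0) :
    d + 1 ≤ f.totalDegree := by
  by_contra hlt
  push_neg at hlt
  have hdeg : f.totalDegree ≤ d := Nat.lt_succ_iff.mp hlt
  choose P hP1 hP2 hPz using hzero
  have hdet := hfunction P (fun i => ⟨hP1 i, hP2 i⟩)
  set e : MonIdx d → (Fin 2 →₀ ℕ) :=
    fun m => Finsupp.equivFunOnFinite.symm ![(m.1.1 : ℕ), (m.1.2 : ℕ)] with he
  have he_apply : ∀ m : MonIdx d, (e m) 0 = (m.1.1 : ℕ) ∧ (e m) 1 = (m.1.2 : ℕ) := by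
    intro m; constructor <;> simp [he]
  have he_inj : Function.Injective e := by
    intro m m' h
    have h' := Finsupp.equivFunOnFinite.symm.injective h
    have h0 := congrFun h' 0
    have h1 := congrFun h' 1
    simp only [Matrix.cons_val_zero, Matrix.cons_val_one, Matrix.head_cons] at h0 h1
    apply Subtype.ext
    apply Prod.ext
    · exact Fin.ext h0
    · exact Fin.ext h1
  -- every support element lies in the image of e
  have hsupp : ∀ s ∈ f.support, ∃ m : MonIdx d, e m = s := by
    intro s hs
    have hsum : s 0 + s 1 ≤ d := by
      have h1 : (s.sum fun _ n => n) ≤ f.totalDegree := MvPolynomial.le_totalDegree hs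
      have h2 : (s.sum fun _ n => n) = s 0 + s 1 := by
        rw [Finsupp.sum_fintype _ _ (fun _ => rfl), Fin.sum_univ_two]
      omega
    have h0 : s 0 < d + 1 := by omega
    have h1 : s 1 < d + 1 := by omega
    refine ⟨⟨(⟨s 0, h0⟩, ⟨s 1, h1⟩), hsum⟩, ?_⟩
    rw [he, Equiv.symm_apply_eq]
    funext i
    fin_cases i <;> simp
  set c : MonIdx d → ℝ := fun m => f.coeff (e m) with hc
  have hc0 : c ≠ 0 := by
    obtain ⟨s, hs⟩ := (MvPolynomial.support_nonempty.mpr hf)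
    obtain ⟨m, hm⟩ := hsupp s hs
    intro hcz
    have : c m = 0 := congrFun hcz m
    rw [hc] at this
    simp only [hm] at this
    exact MvPolynomial.mem_support_iff.mp hs this
  have hkey : ∀ Q : ℝ × ℝ, monVec d Q ⬝ᵥ c = MvPolynomial.eval ![Q.1, Q.2] f := by
    intro Q
    rw [MvPolynomial.eval_eq']
    have himg : f.support ⊆ Finset.univ.image e := by
      intro s hs
      obtain ⟨m, hm⟩ := hsupp s hs
      exact Finset.mem_image.mpr ⟨m, Finset.mem_univ m, hm⟩
    calc monVec d Q ⬝ᵥ c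
        = ∑ m : MonIdx d, f.coeff (e m) * (Q.1 ^ ((e m) 0) * Q.2 ^ ((e m) 1)) := by
          apply Finset.sum_congr rfl
          intro m _
          rw [(he_apply m).1, (he_apply m).2]
          simp [monVec, hc, mul_comm]
      _ = ∑ s ∈ Finset.univ.image e, f.coeff s * (Q.1 ^ (s 0) * Q.2 ^ (s 1)) := by
          rw [Finset.sum_image (fun m _ m' _ h => he_inj h)]
      _ = ∑ s ∈ f.support, f.coeff s * (Q.1 ^ (s 0) * Q.2 ^ (s 1)) := by
          refine (Finset.sum_subset himg ?_).symm
          intro s _ hs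
          rw [MvPolynomial.notMem_support_iff.mp hs, zero_mul]
      _ = ∑ s ∈ f.support, f.coeff s * ∏ i, (![Q.1, Q.2]) i ^ s i := by
          apply Finset.sum_congr rfl
          intro s _
          rw [Fin.prod_univ_two]
          simp
  have hmv : interpMat d N P *ᵥ c = 0 := by
    funext m
    have : ∀ i : Fin N, monVec d (P i) ⬝ᵥ c = 0 := by
      intro i
      rw [hkey (P i)]
      exact hPz i
    simp only [interpMat, Matrix.mulVec, Finset.sum_apply, dotProduct,
      Matrix.vecMulVec_apply, Pi.zero_apply, Matrix.sum_apply]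
    simp only [Finset.sum_mul]
    rw [Finset.sum_comm]
    apply Finset.sum_eq_zero
    intro i _
    have := this i
    simp only [dotProduct] at this
    calc ∑ x : MonIdx d, monVec d (P i) m * monVec d (P i) x * c x
        = monVec d (P i) m * ∑ x : MonIdx d, monVec d (P i) x * c x := by
          rw [Finset.mul_sum]; exact Finset.sum_congr rfl fun x _ => mul_assoc _ _ _
      _ = 0 := by rw [this, mul_zero]
  have : (interpMat d N P).det = 0 :=
    Matrix.exists_mulVec_eq_zero_iff.mp ⟨c, hc0, hmv⟩
  linarith
end

section
/- Let B_i = (a_i, A_i) × (b_i, B_i) ⊂ ℝ², i = 1,…,N, be N open rectangles, let d ≥ 1 with p = (d+1)(d+2)/2 ≤ N, and let Δ_d : ℝ^{2p} → ℝ be defined by Δ_d(x_1,y_1,…,x_p,y_p) = det(M_d(x_1,y_1,…,x_p,y_p)), where M_d is the p×p matrix whose i-th column is v_d(x_i,y_i). Suppose there exist indices 1 ≤ j_1 < j_2 < ⋯ < j_p ≤ N such that Δ_d is strictly positive at every point of B_{j_1} × B_{j_2} × ⋯ × B_{j_p}, or strictly negative at every point of B_{j_1} × B_{j_2} × ⋯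 × B_{j_p}. Then every nonzero real bivariate polynomial f whose zero set intersects every rectangle B_i has total degree at least d+1. -/
open Matrix

/-- The square `p × p` interpolation basis matrix built from `p` points, whose
`i`-th column is `v_d(x_i, y_i)`; `Δ_d` is its determinant. -/
noncomputable def sqBasisMat (d : ℕ) (Q : MonIdx d → ℝ × ℝ) :
    Matrix (MonIdx d) (MonIdx d) ℝ :=
  Matrix.of fun m i => monVec d (Q i) m

/-- Embedding of monomial indices into exponent finsupps. -/
noncomputable def monIdxEmb (d : ℕ) (m : MonIdx d) : Fin 2 →₀ ℕ :=
  Finsupp.single 0 (m.1.1 : ℕ) + Finsupp.single 1 (m.1.2 : ℕ)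

lemma monIdxEmb_apply₀ (d : ℕ) (m : MonIdx d) : monIdxEmb d m 0 = (m.1.1 : ℕ) := by
  simp [monIdxEmb, Finsupp.single_apply]

lemma monIdxEmb_apply₁ (d : ℕ) (m : MonIdx d) : monIdxEmb d m 1 = (m.1.2 : ℕ) := by
  simp [monIdxEmb, Finsupp.single_apply]

lemma monIdxEmb_injective (d : ℕ) : Function.Injective (monIdxEmb d) := by
  intro m₁ m₂ h
  have h0 := congrArg (fun s => s 0) h
  have h1 := congrArg (fun s => s 1) h
  simp only [monIdxEmb_apply₀, monIdxEmb_apply₁] at h0 h1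
  ext <;> assumption

lemma totalDegree_sum_le {f : MvPolynomial (Fin 2) ℝ} {s : Fin 2 →₀ ℕ}
    (hs : s ∈ f.support) : s 0 + s 1 ≤ f.totalDegree := by
  have := MvPolynomial.le_totalDegree hs
  have hsum : s.sum (fun _ n => n) = s 0 + s 1 := by
    rw [Finsupp.sum_fintype _ _ (fun _ => rfl), Fin.sum_univ_two]
  omega

/-- Key evaluation identity when `f.totalDegree ≤ d`. -/
lemma eval_eq_dotProduct {d : ℕ} (f : MvPolynomial (Fin 2) ℝ)
    (hdeg : f.totalDegree ≤ d) (x y : ℝ) :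
    MvPolynomial.eval ![x, y] f =
      ∑ m : MonIdx d, f.coeff (monIdxEmb d m) * (x ^ (m.1.1 : ℕ) * y ^ (m.1.2 : ℕ)) := by
  rw [MvPolynomial.eval_eq']
  have key : ∑ m : MonIdx d, f.coeff (monIdxEmb d m) * (x ^ (m.1.1 : ℕ) * y ^ (m.1.2 : ℕ))
      = ∑ s ∈ Finset.univ.image (monIdxEmb d),
          f.coeff s * (x ^ (s 0) * y ^ (s 1)) := by
    rw [Finset.sum_image (fun a _ b _ h => monIdxEmb_injective d h)]
    refine Finset.sum_congr rfl fun m _ => by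
      rw [monIdxEmb_apply₀, monIdxEmb_apply₁]
  rw [key]
  have hsub : f.support ⊆ Finset.univ.image (monIdxEmb d) := by
    intro s hs
    have hle := totalDegree_sum_le hs
    have h : s 0 + s 1 ≤ d := le_trans hle hdeg
    refine Finset.mem_image.2 ⟨⟨(⟨s 0, by omega⟩, ⟨s 1, by omega⟩), by simpa using h⟩,
      Finset.mem_univ _, ?_⟩
    ext i
    fin_cases i
    · simp [monIdxEmb_apply₀]
    · simp [monIdxEmb_apply₁]
  rw [Finset.sum_subset hsub (fun s _ hs => by
    simp [MvPolynomial.notMem_support_iff.1 hs])]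
  refine Finset.sum_congr rfl fun s _ => ?_
  rw [Fin.prod_univ_two]
  simp [mul_assoc]

/-- Let `B_i` be `N` open rectangles with `p ≤ N`. If there
is a choice of `p` distinct indices `j` (an injection of the `p` monomial
indices into `Fin N`) such that `Δ_d = det M_d` is strictly positive at every
point of `B_{j_1} × ⋯ × B_{j_p}`, or strictly negative at every such point,
then every nonzero real bivariate polynomial whose zero set meets every
rectangle `B_i` has total degree at least `d + 1`. -/
theorem totalDegree_ge_of_sqBasisMat_det_definite_on_boxes
    (N d : ℕ) (hd : 1 ≤ d) (hpN : (d + 1) * (d + 2) / 2 ≤ N)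
    (lo₁ hi₁ lo₂ hi₂ : Fin N → ℝ)
    (j : MonIdx d → Fin N) (hj : Function.Injective j)
    (hdef :
      (∀ Q : MonIdx d → ℝ × ℝ,
        (∀ m : MonIdx d, (Q m).1 ∈ Set.Ioo (lo₁ (j m)) (hi₁ (j m)) ∧
          (Q m).2 ∈ Set.Ioo (lo₂ (j m)) (hi₂ (j m))) →
        0 < (sqBasisMat d Q).det) ∨
      (∀ Q : MonIdx d → ℝ × ℝ,
        (∀ m : MonIdx d, (Q m).1 ∈ Set.Ioo (lo₁ (j m)) (hi₁ (j m)) ∧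
          (Q m).2 ∈ Set.Ioo (lo₂ (j m)) (hi₂ (j m))) →
        (sqBasisMat d Q).det < 0))
    (f : MvPolynomial (Fin 2) ℝ) (hf : f ≠ 0)
    (hzero : ∀ i : Fin N, ∃ P : ℝ × ℝ,
      P.1 ∈ Set.Ioo (lo₁ i) (hi₁ i) ∧ P.2 ∈ Set.Ioo (lo₂ i) (hi₂ i) ∧
      MvPolynomial.eval ![P.1, P.2] f = 0) :
    d + 1 ≤ f.totalDegree := by
  by_contra hcon
  have hdeg : f.totalDegree ≤ d := by omega
  choose P hP₁ hP₂ hPz using hzero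
  set Q : MonIdx d → ℝ × ℝ := fun m => P (j m) with hQdef
  have hQ : ∀ m : MonIdx d, (Q m).1 ∈ Set.Ioo (lo₁ (j m)) (hi₁ (j m)) ∧
      (Q m).2 ∈ Set.Ioo (lo₂ (j m)) (hi₂ (j m)) := fun m => ⟨hP₁ _, hP₂ _⟩
  have hdet : (sqBasisMat d Q).det ≠ 0 := by
    rcases hdef with h | h
    · exact ne_of_gt (h Q hQ)
    · exact ne_of_lt (h Q hQ)
  set c : MonIdx d → ℝ := fun m => f.coeff (monIdxEmb d m) with hcdef
  have hcM : Matrix.vecMul c (sqBasisMat d Q) = 0 := by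
    funext i
    have := eval_eq_dotProduct f hdeg (Q i).1 (Q i).2
    have hz : MvPolynomial.eval ![(Q i).1, (Q i).2] f = 0 := hPz (j i)
    rw [hz] at this
    simpa [Matrix.vecMul, dotProduct, sqBasisMat, monVec, hcdef] using this.symm
  have hc0 : c = 0 := by
    have hunit : IsUnit (sqBasisMat d Q).det := isUnit_iff_ne_zero.2 hdet
    have := congrArg (fun v => Matrix.vecMul v (sqBasisMat d Q)⁻¹) hcM
    simpa [Matrix.vecMul_vecMul, Matrix.mul_nonsing_inv _ hunit] using this
  obtain ⟨s, hs⟩ := (MvPolynomial.ne_zero_iff).1 hf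
  have hle : s 0 + s 1 ≤ d :=
    le_trans (totalDegree_sum_le (MvPolynomial.mem_support_iff.2 hs)) hdeg
  set m : MonIdx d := ⟨(⟨s 0, by omega⟩, ⟨s 1, by omega⟩), by simpa using hle⟩
  have hsm : monIdxEmb d m = s := by
    ext i
    fin_cases i
    · simp [monIdxEmb_apply₀, m]
    · simp [monIdxEmb_apply₁, m]
  have : c m = 0 := by rw [hc0]; rfl
  rw [hcdef] at this
  simp only [hsm] at this
  exact hs this
end

section
/- Let m_j(x,y) = x^{k_j} y^{l_j}, j = 1,…,q, be q monomials, and let f(x,y) = Σ_{j=1}^q c_j m_j(x,y) with real coefficients satisfying |c_j| ≤ 1 for all j. Let δ > 0 and let (x_i, y_i), i = 1,…,N, be points with x_i > 0 and y_i − δ > 0, and suppose that for each i there exists Δy_i with |Δy_i| ≤ δ such that f(x_i, y_i + Δy_i) = 0 (i.e., the curve f = 0 passes through the vertical segment S_i = {x_i} × [y_i − δ, y_i + δ]). Then Σ_{i=1}^N f(x_i, y_i)² ≤ δ²·q·Σ_{i=1}^N h(x_i, y_i + δ), where h(x,y) = Σ_{j=1}^q (∂m_j/∂y)(x,y)² =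 Σ_{j=1}^q l_j²·x^{2k_j}·y^{2l_j − 2}. -/
lemma abs_pow_sub_pow_le' {a b M : ℝ} (n : ℕ) (ha : 0 ≤ a) (hb : 0 ≤ b)
    (haM : a ≤ M) (hbM : b ≤ M) : |a ^ n - b ^ n| ≤ n * M ^ (n - 1) * |a - b| := by
  have hM : 0 ≤ M := ha.trans haM
  rw [← geom_sum₂_mul, abs_mul]
  gcongr
  calc |∑ i ∈ Finset.range n, a ^ i * b ^ (n - 1 - i)|
      ≤ ∑ i ∈ Finset.range n, |a ^ i * b ^ (n - 1 - i)| := Finset.abs_sum_le_sum_abs _ _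
    _ ≤ ∑ i ∈ Finset.range n, M ^ (n - 1) := by
        apply Finset.sum_le_sum
        intro i hi
        rw [Finset.mem_range] at hi
        rw [abs_mul, abs_pow, abs_pow, abs_of_nonneg ha, abs_of_nonneg hb]
        calc a ^ i * b ^ (n - 1 - i) ≤ M ^ i * M ^ (n - 1 - i) := by gcongr
          _ = M ^ (n - 1) := by rw [← pow_add]; congr 1; omega
    _ = n * M ^ (n - 1) := by rw [Finset.sum_const, Finset.card_range, nsmul_eq_mul]

/-- Let `f(x,y) = ∑_j c_j x^{k_j} y^{l_j}` with `|c_j| ≤ 1`,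
and suppose the curve `f = 0` passes through each vertical segment
`{x_i} × [y_i − δ, y_i + δ]` (with `x_i > 0`, `y_i − δ > 0`). Then
`∑_i f(x_i, y_i)² ≤ δ² q ∑_i h(x_i, y_i + δ)`, where
`h(x,y) = ∑_j l_j² x^{2 k_j} y^{2 l_j − 2}` is the sum of the squared partial
derivatives `∂m_j/∂y`. -/
theorem sum_sq_le_of_passes_through_segments
    (q N : ℕ) (k l : Fin q → ℕ) (c : Fin q → ℝ) (hc : ∀ j, |c j| ≤ 1)
    (δ : ℝ) (hδ : 0 < δ) (x y : Fin N → ℝ)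
    (hx : ∀ i, 0 < x i) (hy : ∀ i, 0 < y i - δ)
    (Δy : Fin N → ℝ) (hΔy : ∀ i, |Δy i| ≤ δ)
    (hzero : ∀ i, ∑ j, c j * (x i) ^ (k j) * (y i + Δy i) ^ (l j) = 0) :
    ∑ i, (∑ j, c j * (x i) ^ (k j) * (y i) ^ (l j)) ^ 2 ≤
      δ ^ 2 * q *
        ∑ i, ∑ j, (l j : ℝ) ^ 2 * (x i) ^ (2 * k j) * (y i + δ) ^ (2 * l j - 2) := by
  have key : ∀ i, (∑ j, c j * (x i) ^ (k j) * (y i) ^ (l j)) ^ 2 ≤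
      δ ^ 2 * q * ∑ j, (l j : ℝ) ^ 2 * (x i) ^ (2 * k j) * (y i + δ) ^ (2 * l j - 2) := by
    intro i
    set X := x i with hX
    set Y := y i with hY
    set D := Δy i with hD
    have hX0 : 0 < X := hx i
    have hY0 : 0 < Y := by have := hy i; linarith
    have hYD0 : 0 ≤ Y + D := by
      have := (abs_le.mp (hΔy i)).1; have := hy i; linarith
    have hYle : Y ≤ Y + δ := by linarith
    have hYDle : Y + D ≤ Y + δ := by
      have := (abs_le.mp (hΔy i)).2; linarith
    have hM0 : 0 ≤ Y + δ := by linarith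
    have hF : ∑ j, c j * X ^ k j * Y ^ l j
        = ∑ j, c j * X ^ k j * (Y ^ l j - (Y + D) ^ l j) := by
      rw [← sub_zero (∑ j, c j * X ^ k j * Y ^ l j), ← hzero i, ← Finset.sum_sub_distrib]
      exact Finset.sum_congr rfl fun j _ => by ring
    have habs : |∑ j, c j * X ^ k j * Y ^ l j|
        ≤ ∑ j, δ * (l j : ℝ) * X ^ k j * (Y + δ) ^ (l j - 1) := by
      rw [hF]
      refine (Finset.abs_sum_le_sum_abs _ _).trans (Finset.sum_le_sum fun j _ => ?_)
      rw [abs_mul, abs_mul, abs_pow, abs_of_nonneg hX0.le]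
      have h1 : |Y ^ l j - (Y + D) ^ l j|
          ≤ (l j : ℝ) * (Y + δ) ^ (l j - 1) * |Y - (Y + D)| :=
        abs_pow_sub_pow_le' (l j) hY0.le hYD0 hYle hYDle
      have h2 : |Y - (Y + D)| ≤ δ := by
        rw [show Y - (Y + D) = -D by ring, abs_neg]; exact hΔy i
      have h3 : |Y ^ l j - (Y + D) ^ l j| ≤ (l j : ℝ) * (Y + δ) ^ (l j - 1) * δ :=
        h1.trans (mul_le_mul_of_nonneg_left h2 (by positivity))
      calc |c j| * X ^ k j * |Y ^ l j - (Y + D) ^ l j|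
          ≤ 1 * X ^ k j * ((l j : ℝ) * (Y + δ) ^ (l j - 1) * δ) :=
            mul_le_mul (mul_le_mul_of_nonneg_right (hc j) (by positivity)) h3
              (abs_nonneg _) (by positivity)
        _ = δ * (l j : ℝ) * X ^ k j * (Y + δ) ^ (l j - 1) := by ring
    have hsq : (∑ j, c j * X ^ k j * Y ^ l j) ^ 2
        ≤ (∑ j, δ * (l j : ℝ) * X ^ k j * (Y + δ) ^ (l j - 1)) ^ 2 := by
      rw [← sq_abs]
      exact pow_le_pow_left₀ (abs_nonneg _) habs 2
    have hcs : (∑ j, δ * (l j : ℝ) * X ^ k j * (Y + δ) ^ (l j - 1)) ^ 2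
        ≤ q * ∑ j, (δ * (l j : ℝ) * X ^ k j * (Y + δ) ^ (l j - 1)) ^ 2 := by
      have := sq_sum_le_card_mul_sum_sq
        (s := Finset.univ) (f := fun j => δ * (l j : ℝ) * X ^ k j * (Y + δ) ^ (l j - 1))
      simpa using this
    have hterm : ∀ j, (δ * (l j : ℝ) * X ^ k j * (Y + δ) ^ (l j - 1)) ^ 2
        = δ ^ 2 * ((l j : ℝ) ^ 2 * X ^ (2 * k j) * (Y + δ) ^ (2 * l j - 2)) := by
      intro j
      rcases Nat.eq_zero_or_pos (l j) with h | h
      · simp [h]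
      · have e1 : (X ^ k j) ^ 2 = X ^ (2 * k j) := by
          rw [← pow_mul, mul_comm]
        have e2 : ((Y + δ) ^ (l j - 1)) ^ 2 = (Y + δ) ^ (2 * l j - 2) := by
          rw [← pow_mul]; congr 1; omega
        rw [mul_pow, mul_pow, mul_pow, e1, e2]; ring
    calc (∑ j, c j * X ^ k j * Y ^ l j) ^ 2
        ≤ q * ∑ j, (δ * (l j : ℝ) * X ^ k j * (Y + δ) ^ (l j - 1)) ^ 2 := hsq.trans hcs
      _ = δ ^ 2 * q * ∑ j, (l j : ℝ) ^ 2 * X ^ (2 * k j) * (Y + δ) ^ (2 * l j - 2) := by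
          simp_rw [hterm]
          rw [← Finset.mul_sum]; ring
  calc ∑ i, (∑ j, c j * (x i) ^ (k j) * (y i) ^ (l j)) ^ 2
      ≤ ∑ i, δ ^ 2 * q * ∑ j, (l j : ℝ) ^ 2 * (x i) ^ (2 * k j) * (y i + δ) ^ (2 * l j - 2) :=
        Finset.sum_le_sum fun i _ => key i
    _ = _ := by rw [← Finset.mul_sum]
end
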